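/- Let [M] be the set of 2×2 real matrices M with m₁₁ ∈ [4, 5], m₁₂ ∈ [−1, 2], m₂₁ ∈ [−1, 2], m₂₂ ∈ [2, 3], and let [q] be the set of q ∈ ℝ² with q₁ ∈ [−2, −1], q₂ ∈ [−1, 1]. Let z̲ = (5/7, 6/7), which solves LCP(M̲, q̲) for M̲ with rows (4, −1), (−1, 2) and q̲ = (−2, −1). Then every vector z solving LCP(M, q) for some M ∈ [M] and q ∈ [q] satisfies z ≤ z̲ entrywise; and every vector z ≠ z̲ solving LCP(M, q) for some symmetric M ∈ [M] and q ∈ [q] satisfies z < z̲ entrywise. -/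

import Mathlib

/-!
On the interval data every solution `z` satisfies `q̲ + M̲ z ≤ 0` for the lower endpoints
`M̲ = [[4, -1], [-1, 2]]`, `q̲ = (-2, -1)`: where `z i > 0` complementarity makes the `i`-th
residual of `(M, q)` vanish and it dominates that of `(M̲, q̲)`; where `z i = 0` only the
nonpositive off-diagonal entries of `M̲` and `q̲ i ≤ 0` remain. Since `M̲` has a nonnegative
inverse this gives `z ≤ M̲⁻¹ (-q̲) = z̲`, and the two rows of `M̲ z ≤ -q̲` show that equality
in one coordinate forces equality in the other.
-/

/-- `z` solves the linear complementarity problem LCP(M, q). -/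
def SolvesLCP {n : ℕ} (M : Matrix (Fin n) (Fin n) ℝ) (q z : Fin n → ℝ) : Prop :=
  (∀ i, 0 ≤ q i + M.mulVec z i) ∧ (∀ i, 0 ≤ z i) ∧ (∑ i, (q i + M.mulVec z i) * z i) = 0

/-- Membership of a 2×2 matrix in the interval matrix of Example 6.1.2. -/
def MemIntervalM (M : Matrix (Fin 2) (Fin 2) ℝ) : Prop :=
  M 0 0 ∈ Set.Icc (4 : ℝ) 5 ∧ M 0 1 ∈ Set.Icc (-1 : ℝ) 2 ∧
  M 1 0 ∈ Set.Icc (-1 : ℝ) 2 ∧ M 1 1 ∈ Set.Icc (2 : ℝ) 3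

/-- Membership of a vector in the interval vector of Example 6.1.2. -/
def MemIntervalQ (q : Fin 2 → ℝ) : Prop :=
  q 0 ∈ Set.Icc (-2 : ℝ) (-1) ∧ q 1 ∈ Set.Icc (-1 : ℝ) 1

namespace SolvesLCP

variable {n : ℕ} {M L : Matrix (Fin n) (Fin n) ℝ} {q p z : Fin n → ℝ}

theorem residual_mul_eq_zero (h : SolvesLCP M q z) (i : Fin n) :
    (q i + M.mulVec z i) * z i = 0 :=
  (Finset.sum_eq_zero_iff_of_nonneg fun j _ => mul_nonneg (h.1 j) (h.2.1 j)).1 h.2.2 i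
    (Finset.mem_univ i)

theorem residual_eq_zero_of_pos (h : SolvesLCP M q z) {i : Fin n} (hi : 0 < z i) :
    q i + M.mulVec z i = 0 :=
  (mul_eq_zero.1 (h.residual_mul_eq_zero i)).resolve_right hi.ne'

theorem lower_residual_nonpos (h : SolvesLCP M q z) (hLM : ∀ i j, L i j ≤ M i j) (hpq : p ≤ q)
    (hL : ∀ i j, i ≠ j → L i j ≤ 0) (hp : p ≤ 0) (i : Fin n) :
    p i + L.mulVec z i ≤ 0 := by
  change p i + ∑ j, L i j * z j ≤ 0
  have hpi : p i ≤ 0 := hp i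
  rcases (h.2.1 i).eq_or_lt with hzi | hzi
  · have hLz : ∑ j, L i j * z j ≤ 0 := by
      refine Finset.sum_nonpos fun j _ => ?_
      rcases eq_or_ne i j with rfl | hij
      · simp [← hzi]
      · exact mul_nonpos_of_nonpos_of_nonneg (hL i j hij) (h.2.1 j)
    exact add_nonpos hpi hLz
  · have hLz : ∑ j, L i j * z j ≤ ∑ j, M i j * z j :=
      Finset.sum_le_sum fun j _ => mul_le_mul_of_nonneg_right (hLM i j) (h.2.1 j)
    have hres : q i + ∑ j, M i j * z j = 0 := h.residual_eq_zero_of_pos hzi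
    linarith [hpq i]

end SolvesLCP

theorem solvesLCP_lowerSolution :
    SolvesLCP !![(4 : ℝ), -1; -1, 2] ![-2, -1] ![5/7, 6/7] := by
  refine ⟨?_, ?_, ?_⟩
  · intro i; fin_cases i <;> norm_num
  · intro i; fin_cases i <;> norm_num
  · norm_num [Fin.sum_univ_two]

theorem SolvesLCP.rows_le_of_memInterval {M : Matrix (Fin 2) (Fin 2) ℝ} {q z : Fin 2 → ℝ}
    (hM : MemIntervalM M) (hq : MemIntervalQ q) (h : SolvesLCP M q z) :
    4 * z 0 - z 1 ≤ 2 ∧ 2 * z 1 - z 0 ≤ 1 := by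
  obtain ⟨⟨hM₀₀, -⟩, ⟨hM₀₁, -⟩, ⟨hM₁₀, -⟩, ⟨hM₁₁, -⟩⟩ := hM
  obtain ⟨⟨hq₀, -⟩, ⟨hq₁, -⟩⟩ := hq
  have hres := h.lower_residual_nonpos (L := !![4, -1; -1, 2]) (p := ![-2, -1])
    (by simp [Fin.forall_fin_two, *]) (by simp [Pi.le_def, Fin.forall_fin_two, *])
    (by simp [Fin.forall_fin_two]) (by simp [Pi.le_def, Fin.forall_fin_two])
  have h₀ := hres 0
  have h₁ := hres 1
  simp only [Matrix.mulVec, dotProduct, Fin.sum_univ_two, Matrix.of_apply, Matrix.cons_val',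
    Matrix.cons_val_zero, Matrix.cons_val_one, Matrix.cons_val_fin_one] at h₀ h₁
  constructor <;> linarith

theorem le_lowerSolution_of_rows_le {z : Fin 2 → ℝ} (h₀ : 4 * z 0 - z 1 ≤ 2)
    (h₁ : 2 * z 1 - z 0 ≤ 1) : ∀ i, z i ≤ (![5/7, 6/7] : Fin 2 → ℝ) i := by
  simp only [Fin.forall_fin_two, Matrix.cons_val_zero, Matrix.cons_val_one]
  constructor <;> linarith

theorem lt_lowerSolution_of_rows_le {z : Fin 2 → ℝ} (h₀ : 4 * z 0 - z 1 ≤ 2)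
    (h₁ : 2 * z 1 - z 0 ≤ 1) (hne : z ≠ ![5/7, 6/7]) :
    ∀ i, z i < (![5/7, 6/7] : Fin 2 → ℝ) i := by
  have hcoords : z 0 = 5/7 → z 1 = 6/7 → z = ![5/7, 6/7] := fun hz₀ hz₁ => by
    ext i; fin_cases i
    exacts [hz₀, hz₁]
  have hz₀ : z 0 ≠ 5/7 := fun hz₀ => hne (hcoords hz₀ (by linarith))
  have hz₁ : z 1 ≠ 6/7 := fun hz₁ => hne (hcoords (by linarith) hz₁)
  have hle := le_lowerSolution_of_rows_le h₀ h₁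
  simp only [Fin.forall_fin_two, Matrix.cons_val_zero, Matrix.cons_val_one] at hle ⊢
  exact ⟨hle.1.lt_of_ne hz₀, hle.2.lt_of_ne hz₁⟩

theorem stmt17 :
    SolvesLCP !![(4 : ℝ), -1; -1, 2] ![-2, -1] ![5/7, 6/7] ∧
    (∀ (M : Matrix (Fin 2) (Fin 2) ℝ) (q z : Fin 2 → ℝ),
      MemIntervalM M → MemIntervalQ q → SolvesLCP M q z →
      ∀ i, z i ≤ (![5/7, 6/7] : Fin 2 → ℝ) i) ∧
    (∀ (M : Matrix (Fin 2) (Fin 2) ℝ) (q z : Fin 2 → ℝ),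
      MemIntervalM M → M.IsSymm → MemIntervalQ q → SolvesLCP M q z →
      z ≠ ![5/7, 6/7] → ∀ i, z i < (![5/7, 6/7] : Fin 2 → ℝ) i) := by
  refine ⟨solvesLCP_lowerSolution, fun M q z hM hq hz => ?_, fun M q z hM _ hq hz hne => ?_⟩
  · obtain ⟨h₀, h₁⟩ := hz.rows_le_of_memInterval hM hq
    exact le_lowerSolution_of_rows_le h₀ h₁
  · obtain ⟨h₀, h₁⟩ := hz.rows_le_of_memInterval hM hq
    exact lt_lowerSolution_of_rows_le h₀ h₁ hne
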